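/- arXiv:2106.10726 — 5 statements merged into one kernel-verified Lean document; each statement's English description precedes it below -/
import Mathlib

section
/- Let n ≥ 1 be an integer and let ν be a probability measure on [0,1] with mean u = ∫_{[0,1]} w dν(w). Then | (1/n) ∑_{i=1}^{n} ν({w ∈ [0,1] : w ≥ (i − 1/2)/n}) − u | ≤ 1/(2n). -/
open MeasureTheory

/-- Pointwise bound: for `w ∈ [0,1]`, the averaged indicator sum is within `1/(2n)` of `w`. -/
lemma key_pointwise (n : ℕ) (hn : 1 ≤ n) (w : ℝ) (hw : w ∈ Set.Icc (0 : ℝ) 1) :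
    |(1 / (n : ℝ)) * (∑ i ∈ Finset.Icc 1 n,
        (Set.Ici (((i : ℝ) - 1 / 2) / n)).indicator (fun _ => (1 : ℝ)) w) - w| ≤
      1 / (2 * n) := by
  have hn0 : (0 : ℝ) < n := by exact_mod_cast hn
  have hx0 : (0 : ℝ) ≤ (n : ℝ) * w + 1 / 2 := by nlinarith [hw.1]
  set m : ℕ := ⌊(n : ℝ) * w + 1 / 2⌋₊ with hm
  have hcond : ∀ i : ℕ, ((((i : ℝ) - 1 / 2) / n ≤ w) ↔ i ≤ m) := by
    intro i
    rw [div_le_iff₀ hn0, hm, Nat.le_floor_iff hx0]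
    constructor <;> intro h <;> linarith
  have hmn : m ≤ n := by
    have : ((n : ℝ) * w + 1 / 2) < (n : ℝ) + 1 := by nlinarith [hw.2]
    have h2 : m < n + 1 := by
      rw [hm, Nat.floor_lt hx0]
      push_cast
      linarith
    omega
  have hsum : (∑ i ∈ Finset.Icc 1 n,
      (Set.Ici (((i : ℝ) - 1 / 2) / n)).indicator (fun _ => (1 : ℝ)) w) = (m : ℝ) := by
    have : ∀ i ∈ Finset.Icc 1 n,
        (Set.Ici (((i : ℝ) - 1 / 2) / n)).indicator (fun _ => (1 : ℝ)) w
          = if i ≤ m then (1 : ℝ) else 0 := by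
      intro i _
      by_cases h : i ≤ m
      · rw [if_pos h, Set.indicator_of_mem]
        exact Set.mem_Ici.mpr ((hcond i).2 h)
      · rw [if_neg h, Set.indicator_of_notMem]
        intro hc
        exact h ((hcond i).1 (Set.mem_Ici.mp hc))
    rw [Finset.sum_congr rfl this, Finset.sum_boole]
    have hfil : (Finset.Icc 1 n).filter (fun i => i ≤ m) = Finset.Icc 1 m := by
      ext i
      simp only [Finset.mem_filter, Finset.mem_Icc]
      omega
    rw [hfil]
    simp [Nat.card_Icc]
  rw [hsum]
  have h1 : (m : ℝ) ≤ (n : ℝ) * w + 1 / 2 := Nat.floor_le hx0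
  have h2 : (n : ℝ) * w + 1 / 2 < (m : ℝ) + 1 := Nat.lt_floor_add_one _
  have heq : (1 / (n : ℝ)) * (m : ℝ) - w = ((m : ℝ) - (n : ℝ) * w) / n := by
    field_simp
  rw [heq, abs_div, abs_of_pos hn0]
  have habs : |(m : ℝ) - (n : ℝ) * w| ≤ 1 / 2 := by
    rw [abs_le]; constructor <;> linarith
  calc |(m : ℝ) - (n : ℝ) * w| / n ≤ (1 / 2) / n := by gcongr
    _ = 1 / (2 * n) := by ring

/-- For a probability measure `ν` on `[0,1]` with mean `u`,
`|(1/n) ∑_{i=1}^{n} ν({w ∈ [0,1] : w ≥ (i − 1/2)/n}) − u| ≤ 1/(2n)`. -/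
theorem abs_avg_halfshift_tail_sub_mean_le (n : ℕ) (hn : 1 ≤ n)
    (ν : Measure ℝ) [IsProbabilityMeasure ν] (hsupp : ν (Set.Icc (0 : ℝ) 1)ᶜ = 0)
    (u : ℝ) (hu : u = ∫ w in Set.Icc (0 : ℝ) 1, w ∂ν) :
    |(1 / (n : ℝ)) * ∑ i ∈ Finset.Icc 1 n,
        (ν {w : ℝ | w ∈ Set.Icc (0 : ℝ) 1 ∧ ((i : ℝ) - 1 / 2) / n ≤ w}).toReal - u| ≤
      1 / (2 * n) := by
  set S : Set ℝ := Set.Icc (0 : ℝ) 1 with hS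
  have hSm : MeasurableSet S := measurableSet_Icc
  have hνS : ν S = 1 := by
    have h := measure_add_measure_compl (μ := ν) hSm
    rw [hsupp, add_zero, measure_univ] at h
    exact h
  -- indicator functions
  set ind : ℕ → ℝ → ℝ :=
    fun i => (Set.Ici (((i : ℝ) - 1 / 2) / n)).indicator (fun _ => (1 : ℝ)) with hind
  have hint_i : ∀ i : ℕ, Integrable (ind i) (ν.restrict S) :=
    fun i => (integrable_const (1 : ℝ)).indicator measurableSet_Ici
  -- each measure equals a set integral of the indicator
  have hmeas_eq : ∀ i ∈ Finset.Icc 1 n,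
      (ν {w : ℝ | w ∈ Set.Icc (0 : ℝ) 1 ∧ ((i : ℝ) - 1 / 2) / n ≤ w}).toReal
        = ∫ w in S, ind i w ∂ν := by
    intro i _
    have hseteq : {w : ℝ | w ∈ Set.Icc (0 : ℝ) 1 ∧ ((i : ℝ) - 1 / 2) / n ≤ w}
        = S ∩ Set.Ici (((i : ℝ) - 1 / 2) / n) := by
      ext w; simp [Set.mem_Ici, hS]
    rw [hind]
    rw [setIntegral_indicator measurableSet_Ici, setIntegral_const, smul_eq_mul, mul_one,
      hseteq]
    rfl
  -- swap sum and integral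
  have hsum_eq : (∑ i ∈ Finset.Icc 1 n,
      (ν {w : ℝ | w ∈ Set.Icc (0 : ℝ) 1 ∧ ((i : ℝ) - 1 / 2) / n ≤ w}).toReal)
        = ∫ w in S, (∑ i ∈ Finset.Icc 1 n, ind i w) ∂ν := by
    rw [Finset.sum_congr rfl hmeas_eq, ← integral_finset_sum _ (fun i _ => hint_i i)]
  have hF : Integrable (fun w => ∑ i ∈ Finset.Icc 1 n, ind i w) (ν.restrict S) :=
    integrable_finset_sum _ (fun i _ => hint_i i)
  have hid : Integrable (fun w : ℝ => w) (ν.restrict S) := by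
    apply Integrable.mono' (integrable_const (1 : ℝ)) measurable_id.aestronglyMeasurable
    filter_upwards [ae_restrict_mem hSm] with w hw
    simp only [Real.norm_eq_abs, id_eq]
    rw [abs_le]
    exact ⟨by linarith [hw.1], hw.2⟩
  have hcombine : (1 / (n : ℝ)) * ∑ i ∈ Finset.Icc 1 n,
      (ν {w : ℝ | w ∈ Set.Icc (0 : ℝ) 1 ∧ ((i : ℝ) - 1 / 2) / n ≤ w}).toReal - u
        = ∫ w in S, ((1 / (n : ℝ)) * (∑ i ∈ Finset.Icc 1 n, ind i w) - w) ∂ν := by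
    rw [integral_sub (hF.const_mul _) hid, integral_const_mul, hsum_eq, hu]
  rw [hcombine]
  have hbound : ∀ᵐ w ∂(ν.restrict S),
      ‖(1 / (n : ℝ)) * (∑ i ∈ Finset.Icc 1 n, ind i w) - w‖ ≤ 1 / (2 * n) := by
    filter_upwards [ae_restrict_mem hSm] with w hw
    rw [Real.norm_eq_abs]
    exact key_pointwise n hn w hw
  have := norm_integral_le_of_norm_le_const hbound
  rw [Real.norm_eq_abs] at this
  calc |∫ w in S, ((1 / (n : ℝ)) * (∑ i ∈ Finset.Icc 1 n, ind i w) - w) ∂ν|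
      ≤ 1 / (2 * n) * ((ν.restrict S) Set.univ).toReal := this
    _ = 1 / (2 * n) := by
        rw [Measure.restrict_apply_univ, hνS]
        simp
end

section
/- Fix an integer n ≥ 1, ρ ∈ (0,n) and w ∈ (0,1), and set τ = (n−ρ)/ρ > 0. Define f : [0,1] → ℝ by f(0) = 0, f(1) = 1 and, for t ∈ (0,1), f(t) = 1 − (Γ(τ)/(Γ(tτ) Γ((1−t)τ))) ∫_0^w x^{tτ−1}(1−x)^{(1−t)τ−1} dx, i.e., f(t) is the survival function of the Beta(tτ, (1−t)τ) distribution evaluated at w, with the convention that the Beta distribution is degenerate at 0 for t = 0 and degenerate at 1 for t = 1. Then f is continuous on [0,1]. -/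
set_option maxHeartbeats 1600000

open Real MeasureTheory Set Filter Topology intervalIntegral



lemma rpow_bound {c y e emin : ℝ} (hc : 0 < c) (hc1 : c ≤ 1) (h1 : c ≤ y) (h2 : y ≤ 1)
    (he : emin ≤ e) : y ^ e ≤ max (c ^ emin) 1 := by
  rcases le_or_gt 0 e with h0 | h0
  · exact le_max_of_le_right (Real.rpow_le_one (by linarith) h2 h0)
  · refine le_max_of_le_left (le_trans (Real.rpow_le_rpow_of_nonpos hc h1 h0.le)
      (Real.rpow_le_rpow_of_exponent_ge hc hc1 he))

lemma measurable_rpow_const (c : ℝ) : Measurable fun x : ℝ => x ^ c := by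
  have h : (fun x : ℝ => x ^ c) = fun x =>
      if x = 0 then (0:ℝ) ^ c
      else Real.exp (Real.log x * c) * (if x < 0 then Real.cos (c * Real.pi) else 1) := by
    funext x
    rcases lt_trichotomy x 0 with hx | hx | hx
    · rw [if_neg hx.ne, if_pos hx, Real.rpow_def_of_neg hx, mul_comm c]
    · simp [hx]
    · rw [if_neg hx.ne', if_neg (not_lt.2 hx.le), Real.rpow_def_of_pos hx, mul_one]
  rw [h]
  exact Measurable.ite (measurableSet_eq) measurable_const
    (((Real.measurable_log.mul_const c).exp).mul
      (Measurable.ite measurableSet_Iio measurable_const measurable_const))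

lemma meas_betaKernel (a b : ℝ) : Measurable (fun x : ℝ => x ^ (a-1) * (1-x) ^ (b-1)) :=
  ((measurable_rpow_const (a-1)).mul
    ((measurable_rpow_const (b-1)).comp (measurable_const.sub measurable_id)))

lemma intInt_left {a b w : ℝ} (ha : 0 < a) (hw0 : 0 ≤ w) (hw1 : w < 1) :
    IntervalIntegrable (fun x : ℝ => x ^ (a-1) * (1-x) ^ (b-1)) volume 0 w := by
  have hg : IntervalIntegrable (fun x : ℝ => x ^ (a-1) * max ((1-w) ^ (b-1)) 1) volume 0 w :=
    (intervalIntegrable_rpow' (by linarith)).mul_const _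
  refine hg.mono_fun' (meas_betaKernel a b).aestronglyMeasurable ?_
  filter_upwards [ae_restrict_mem measurableSet_uIoc] with x hx
  rw [Set.uIoc_of_le hw0] at hx
  have hx0 : 0 < x := hx.1
  have hx1 : x ≤ w := hx.2
  have h1x : 1 - w ≤ 1 - x := by linarith
  have h1x' : 1 - x ≤ 1 := by linarith
  have hb : (1-x) ^ (b-1) ≤ max ((1-w) ^ (b-1)) 1 :=
    rpow_bound (by linarith) (by linarith) h1x h1x' le_rfl
  have h0 : 0 ≤ x ^ (a-1) := Real.rpow_nonneg hx0.le _
  calc ‖x ^ (a-1) * (1-x) ^ (b-1)‖ = x ^ (a-1) * (1-x) ^ (b-1) := by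
        rw [Real.norm_eq_abs, abs_of_nonneg (mul_nonneg h0 (Real.rpow_nonneg (by linarith) _))]
    _ ≤ x ^ (a-1) * max ((1-w) ^ (b-1)) 1 := by
        exact mul_le_mul_of_nonneg_left hb h0

lemma intInt_right {a b w : ℝ} (hb : 0 < b) (hw0 : 0 < w) (hw1 : w ≤ 1) :
    IntervalIntegrable (fun x : ℝ => x ^ (a-1) * (1-x) ^ (b-1)) volume w 1 := by
  have hg0 : IntervalIntegrable (fun x : ℝ => x ^ (b-1)) volume 0 (1-w) :=
    intervalIntegrable_rpow' (by linarith)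
  have hg1 : IntervalIntegrable (fun x : ℝ => (1-x) ^ (b-1)) volume w 1 := by
    have := (hg0.comp_sub_left 1).symm
    simpa using this
  have hg : IntervalIntegrable (fun x : ℝ => (1-x) ^ (b-1) * max (w ^ (a-1)) 1) volume w 1 :=
    hg1.mul_const _
  refine hg.mono_fun' (meas_betaKernel a b).aestronglyMeasurable ?_
  filter_upwards [ae_restrict_mem measurableSet_uIoc] with x hx
  rw [Set.uIoc_of_le hw1] at hx
  have hxw : w ≤ x := hx.1.le
  have hx1 : x ≤ 1 := hx.2
  have ha' : x ^ (a-1) ≤ max (w ^ (a-1)) 1 := rpow_bound hw0 (by linarith) hxw hx1 le_rfl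
  have h0 : 0 ≤ (1-x) ^ (b-1) := Real.rpow_nonneg (by linarith) _
  calc ‖x ^ (a-1) * (1-x) ^ (b-1)‖ = x ^ (a-1) * (1-x) ^ (b-1) := by
        rw [Real.norm_eq_abs, abs_of_nonneg (mul_nonneg (Real.rpow_nonneg (by linarith) _) h0)]
    _ ≤ (1-x) ^ (b-1) * max (w ^ (a-1)) 1 := by
        rw [mul_comm]
        exact mul_le_mul_of_nonneg_left ha' h0


/-- Real version of the beta-Gamma identity. -/
lemma real_Gamma_mul_Gamma_beta {a b : ℝ} (ha : 0 < a) (hb : 0 < b) :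
    Real.Gamma a * Real.Gamma b
      = Real.Gamma (a + b) * ∫ x in (0:ℝ)..1, x ^ (a-1) * (1-x) ^ (b-1) := by
  have h := Complex.Gamma_mul_Gamma_eq_betaIntegral (s := (a:ℂ)) (t := (b:ℂ))
    (by simpa using ha) (by simpa using hb)
  rw [Complex.betaIntegral] at h
  have hint : (∫ x in (0:ℝ)..1, (x:ℂ) ^ ((a:ℂ)-1) * ((1:ℂ)-(x:ℂ)) ^ ((b:ℂ)-1))
      = ((∫ x in (0:ℝ)..1, x ^ (a-1) * (1-x) ^ (b-1) : ℝ) : ℂ) := by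
    rw [← intervalIntegral.integral_ofReal]
    apply intervalIntegral.integral_congr
    intro x hx
    rw [Set.uIcc_of_le (by norm_num : (0:ℝ) ≤ 1)] at hx
    have h1 : (0:ℝ) ≤ x := hx.1
    have h2 : (0:ℝ) ≤ 1 - x := by linarith [hx.2]
    show (x:ℂ) ^ ((a:ℂ) - 1) * ((1:ℂ) - (x:ℂ)) ^ ((b:ℂ) - 1)
        = ((x ^ (a-1) * (1-x) ^ (b-1) : ℝ) : ℂ)
    rw [Complex.ofReal_mul, Complex.ofReal_cpow h1, Complex.ofReal_cpow h2]
    push_cast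
    ring
  rw [hint] at h
  have := h
  rw [show ((a:ℂ) + (b:ℂ)) = ((a+b : ℝ) : ℂ) by push_cast; ring] at this
  rw [Complex.Gamma_ofReal, Complex.Gamma_ofReal, Complex.Gamma_ofReal] at this
  exact_mod_cast this


lemma continuous_Gamma_inv : Continuous fun s : ℝ => (Real.Gamma s)⁻¹ := by
  have h : (fun s : ℝ => (Real.Gamma s)⁻¹)
      = fun s : ℝ => ((Complex.Gamma (s:ℂ))⁻¹).re := by
    funext s
    rw [Complex.Gamma_ofReal, ← Complex.ofReal_inv, Complex.ofReal_re]
  rw [h]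
  exact Complex.continuous_re.comp
    (Complex.differentiable_one_div_Gamma.continuous.comp Complex.continuous_ofReal)

/-- Lemma B.2 of the paper: the beta survival function `t ↦ β̄_{n,t,ρ}(w)` (the survival
function of the `Beta(tτ, (1−t)τ)` distribution at `w`, with `τ = (n−ρ)/ρ`, degenerate at `0`
for `t = 0` and at `1` for `t = 1`) is continuous on `[0,1]`. -/
theorem continuousOn_beta_survival (n : ℕ) (hn : 1 ≤ n) (ρ : ℝ) (hρ : ρ ∈ Set.Ioo (0 : ℝ) n)
    (w : ℝ) (hw : w ∈ Set.Ioo (0 : ℝ) 1) (τ : ℝ) (hτ : τ = ((n : ℝ) - ρ) / ρ)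
    (f : ℝ → ℝ) (hf0 : f 0 = 0) (hf1 : f 1 = 1)
    (hf : ∀ t ∈ Set.Ioo (0 : ℝ) 1,
      f t = 1 - (Real.Gamma τ / (Real.Gamma (t * τ) * Real.Gamma ((1 - t) * τ))) *
        ∫ x in (0 : ℝ)..w, x ^ (t * τ - 1) * (1 - x) ^ ((1 - t) * τ - 1)) :
    ContinuousOn f (Set.Icc (0 : ℝ) 1) := by
  obtain ⟨hρ0, hρn⟩ := hρ
  obtain ⟨hw0, hw1⟩ := hw
  have hτ0 : 0 < τ := by rw [hτ]; exact div_pos (by linarith) hρ0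
  set c : ℝ → ℝ := fun t => Real.Gamma τ * (Real.Gamma (t*τ))⁻¹ * (Real.Gamma ((1-t)*τ))⁻¹
    with hc_def
  set I : ℝ → ℝ := fun t => ∫ x in (0:ℝ)..w, x ^ (t*τ-1) * (1-x) ^ ((1-t)*τ-1) with hI_def
  set J : ℝ → ℝ := fun t => ∫ x in w..(1:ℝ), x ^ (t*τ-1) * (1-x) ^ ((1-t)*τ-1) with hJ_def
  have hc_cont : Continuous c := by
    apply Continuous.mul
    · exact continuous_const.mul
        (continuous_Gamma_inv.comp (continuous_id.mul continuous_const))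
    · exact continuous_Gamma_inv.comp ((continuous_const.sub continuous_id).mul continuous_const)
  have hfc : ∀ t ∈ Set.Ioo (0:ℝ) 1, f t = 1 - c t * I t := by
    intro t ht
    rw [hf t ht]
    congr 1
    rw [hc_def]
    rw [div_eq_mul_inv, mul_inv, ← mul_assoc]
  have hc0 : c 0 = 0 := by simp [hc_def, Real.Gamma_zero]
  have hc1 : c 1 = 0 := by simp [hc_def, Real.Gamma_zero]
  -- the key identity `c t * I t = 1 - c t * J t` on `Ioo 0 1`
  have hkey : ∀ t ∈ Set.Ioo (0:ℝ) 1, c t * I t = 1 - c t * J t := by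
    intro t ht
    have ha : 0 < t * τ := mul_pos ht.1 hτ0
    have hb : 0 < (1-t) * τ := mul_pos (by linarith [ht.2]) hτ0
    have hsum : I t + J t = ∫ x in (0:ℝ)..1, x ^ (t*τ-1) * (1-x) ^ ((1-t)*τ-1) :=
      integral_add_adjacent_intervals (intInt_left ha hw0.le hw1) (intInt_right hb hw0 hw1.le)
    have hbeta := real_Gamma_mul_Gamma_beta ha hb
    rw [show t*τ + (1-t)*τ = τ by ring] at hbeta
    have hΓa : Real.Gamma (t*τ) ≠ 0 := (Real.Gamma_pos_of_pos ha).ne'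
    have hΓb : Real.Gamma ((1-t)*τ) ≠ 0 := (Real.Gamma_pos_of_pos hb).ne'
    have hΓτ : Real.Gamma τ ≠ 0 := (Real.Gamma_pos_of_pos hτ0).ne'
    have hcB : c t * (I t + J t) = 1 := by
      rw [hsum, hc_def]
      have hBval : (∫ x in (0:ℝ)..1, x ^ (t*τ-1) * (1-x) ^ ((1-t)*τ-1))
          = Real.Gamma (t*τ) * Real.Gamma ((1-t)*τ) / Real.Gamma τ := by
        rw [eq_div_iff hΓτ, hbeta]; ring
      rw [hBval]
      field_simp
      rw [mul_comm τ]; exact div_self hΓb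
    have := hcB
    rw [mul_add] at this
    linarith
  -- bound on `J` for `t` near `0`
  have hne1 : ∀ᵐ x : ℝ ∂(volume.restrict (Set.uIoc w 1)), x ≠ 1 := by
    refine ae_restrict_of_ae ?_
    rw [ae_iff]
    simp only [not_not, Set.setOf_eq_eq_singleton]
    exact measure_singleton 1
  set M₀ : ℝ := max (w ^ (-1:ℝ)) 1 with hM₀
  set K₀ : ℝ := |∫ x in w..(1:ℝ), (1-x) ^ (τ/2-1) * M₀| with hK₀
  have hK₀int : IntervalIntegrable (fun x : ℝ => (1-x) ^ (τ/2-1) * M₀) volume w 1 := by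
    have hg0 : IntervalIntegrable (fun x : ℝ => x ^ (τ/2-1)) volume 0 (1-w) :=
      intervalIntegrable_rpow' (by linarith)
    have hg1 : IntervalIntegrable (fun x : ℝ => (1-x) ^ (τ/2-1)) volume w 1 := by
      have := (hg0.comp_sub_left 1).symm
      simpa using this
    exact hg1.mul_const _
  have hJbdd : ∀ t : ℝ, 0 < t → t ≤ 1/2 → ‖J t‖ ≤ K₀ := by
    intro t ht0 ht2
    refine intervalIntegral.norm_integral_le_abs_of_norm_le ?_ hK₀int
    filter_upwards [ae_restrict_mem measurableSet_uIoc, hne1] with x hx hxne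
    rw [Set.uIoc_of_le hw1.le] at hx
    have hxw : w ≤ x := hx.1.le
    have hx1 : x < 1 := lt_of_le_of_ne hx.2 hxne
    have h1x : 0 < 1 - x := by linarith
    have hxpos : 0 < x := lt_of_lt_of_le hw0 hxw
    have h1 : x ^ (t*τ-1) ≤ M₀ := by
      refine rpow_bound hw0 hw1.le hxw hx.2 ?_
      nlinarith
    have h2 : (1-x) ^ ((1-t)*τ-1) ≤ (1-x) ^ (τ/2-1) := by
      refine Real.rpow_le_rpow_of_exponent_ge h1x (by linarith) ?_
      nlinarith
    have hn1 : 0 ≤ x ^ (t*τ-1) := Real.rpow_nonneg hxpos.le _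
    have hn2 : 0 ≤ (1-x) ^ ((1-t)*τ-1) := Real.rpow_nonneg h1x.le _
    calc ‖x ^ (t*τ-1) * (1-x) ^ ((1-t)*τ-1)‖
        = x ^ (t*τ-1) * (1-x) ^ ((1-t)*τ-1) := by
          rw [Real.norm_eq_abs, abs_of_nonneg (mul_nonneg hn1 hn2)]
      _ ≤ M₀ * (1-x) ^ (τ/2-1) :=
          mul_le_mul h1 h2 hn2 (le_trans (by norm_num) (le_max_right (w ^ (-1:ℝ)) 1))
      _ = (1-x) ^ (τ/2-1) * M₀ := mul_comm _ _
  -- bound on `I` for `t` near `1`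
  set M₁ : ℝ := max ((1-w) ^ (-1:ℝ)) 1 with hM₁
  set K₁ : ℝ := |∫ x in (0:ℝ)..w, x ^ (τ/2-1) * M₁| with hK₁
  have hK₁int : IntervalIntegrable (fun x : ℝ => x ^ (τ/2-1) * M₁) volume 0 w :=
    (intervalIntegrable_rpow' (by linarith)).mul_const _
  have hIbdd : ∀ t : ℝ, 1/2 ≤ t → t ≤ 1 → ‖I t‖ ≤ K₁ := by
    intro t ht2 ht1
    refine intervalIntegral.norm_integral_le_abs_of_norm_le ?_ hK₁int
    filter_upwards [ae_restrict_mem measurableSet_uIoc] with x hx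
    rw [Set.uIoc_of_le hw0.le] at hx
    have hxpos : 0 < x := hx.1
    have hxw : x ≤ w := hx.2
    have h1x : 0 < 1 - x := by linarith
    have h1 : x ^ (t*τ-1) ≤ x ^ (τ/2-1) := by
      refine Real.rpow_le_rpow_of_exponent_ge hxpos (by linarith) ?_
      nlinarith
    have h2 : (1-x) ^ ((1-t)*τ-1) ≤ M₁ := by
      refine rpow_bound (by linarith : (0:ℝ) < 1 - w) (by linarith) (by linarith) (by linarith) ?_
      nlinarith
    have hn1 : 0 ≤ x ^ (t*τ-1) := Real.rpow_nonneg hxpos.le _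
    have hn2 : 0 ≤ (1-x) ^ ((1-t)*τ-1) := Real.rpow_nonneg h1x.le _
    calc ‖x ^ (t*τ-1) * (1-x) ^ ((1-t)*τ-1)‖
        = x ^ (t*τ-1) * (1-x) ^ ((1-t)*τ-1) := by
          rw [Real.norm_eq_abs, abs_of_nonneg (mul_nonneg hn1 hn2)]
      _ ≤ x ^ (τ/2-1) * M₁ := mul_le_mul h1 h2 hn2 (Real.rpow_nonneg hxpos.le _)
  -- continuity of `I` at interior points
  have hI_cont : ∀ t₀ ∈ Set.Ioo (0:ℝ) 1, ContinuousAt I t₀ := by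
    intro t₀ ht₀
    obtain ⟨ht₀0, ht₀1⟩ := ht₀
    set ε : ℝ := min t₀ (1 - t₀) / 2 with hε
    have hε0 : 0 < ε := by
      have : 0 < min t₀ (1 - t₀) := lt_min ht₀0 (by linarith)
      positivity
    have hεt : ε ≤ t₀ / 2 := by
      have := min_le_left t₀ (1 - t₀); rw [hε]; linarith
    have hεt' : ε ≤ (1 - t₀) / 2 := by
      have := min_le_right t₀ (1 - t₀); rw [hε]; linarith
    set lo : ℝ := t₀ - ε with hlo
    set hi : ℝ := t₀ + ε with hhi
    have hlo0 : 0 < lo := by rw [hlo]; linarith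
    have hhi1 : hi < 1 := by rw [hhi]; linarith
    refine intervalIntegral.continuousAt_of_dominated_interval
      (bound := fun x => x ^ (lo*τ-1) * max ((1-w) ^ ((1-hi)*τ-1)) 1)
      (Eventually.of_forall fun t => (meas_betaKernel (t*τ) ((1-t)*τ)).aestronglyMeasurable) ?_ ?_ ?_
    · filter_upwards [Ioo_mem_nhds (show lo < t₀ by rw [hlo]; linarith)
        (show t₀ < hi by rw [hhi]; linarith)] with t ht
      refine Eventually.of_forall fun x hx => ?_
      rw [Set.uIoc_of_le hw0.le] at hx
      have hxpos : 0 < x := hx.1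
      have hxw : x ≤ w := hx.2
      have h1x : 0 < 1 - x := by linarith
      have h1 : x ^ (t*τ-1) ≤ x ^ (lo*τ-1) := by
        refine Real.rpow_le_rpow_of_exponent_ge hxpos (by linarith) ?_
        have : lo * τ ≤ t * τ := mul_le_mul_of_nonneg_right ht.1.le hτ0.le
        linarith
      have h2 : (1-x) ^ ((1-t)*τ-1) ≤ max ((1-w) ^ ((1-hi)*τ-1)) 1 := by
        refine rpow_bound (by linarith : (0:ℝ) < 1 - w) (by linarith) (by linarith)
          (by linarith) ?_
        have : (1 - hi) * τ ≤ (1 - t) * τ :=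
          mul_le_mul_of_nonneg_right (by linarith [ht.2]) hτ0.le
        linarith
      have hn1 : 0 ≤ x ^ (t*τ-1) := Real.rpow_nonneg hxpos.le _
      have hn2 : 0 ≤ (1-x) ^ ((1-t)*τ-1) := Real.rpow_nonneg h1x.le _
      calc ‖x ^ (t*τ-1) * (1-x) ^ ((1-t)*τ-1)‖
          = x ^ (t*τ-1) * (1-x) ^ ((1-t)*τ-1) := by
            rw [Real.norm_eq_abs, abs_of_nonneg (mul_nonneg hn1 hn2)]
        _ ≤ x ^ (lo*τ-1) * max ((1-w) ^ ((1-hi)*τ-1)) 1 :=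
            mul_le_mul h1 h2 hn2 (Real.rpow_nonneg hxpos.le _)
    · exact (intervalIntegrable_rpow' (by nlinarith [mul_pos hlo0 hτ0])).mul_const _
    · refine Eventually.of_forall fun x hx => ?_
      rw [Set.uIoc_of_le hw0.le] at hx
      have hxpos : 0 < x := hx.1
      have h1x : 0 < 1 - x := by linarith [hx.2]
      have heq : (fun t : ℝ => x ^ (t*τ-1) * (1-x) ^ ((1-t)*τ-1))
          = fun t : ℝ => Real.exp (Real.log x * (t*τ-1)) *
              Real.exp (Real.log (1-x) * ((1-t)*τ-1)) := by
        funext t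
        rw [Real.rpow_def_of_pos hxpos, Real.rpow_def_of_pos h1x]
      rw [heq]
      apply ContinuousAt.mul <;> apply Continuous.continuousAt
      · exact (continuous_const.mul ((continuous_id.mul continuous_const).sub
          continuous_const)).rexp
      · exact (continuous_const.mul (((continuous_const.sub continuous_id).mul
          continuous_const).sub continuous_const)).rexp
  -- interior continuity
  have hint : ∀ t₀ ∈ Set.Ioo (0:ℝ) 1, ContinuousWithinAt f (Set.Icc (0:ℝ) 1) t₀ := by
    intro t₀ ht₀
    have hca : ContinuousAt (fun t => 1 - c t * I t) t₀ :=
      continuousAt_const.sub ((hc_cont.continuousAt).mul (hI_cont t₀ ht₀))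
    have heq : (fun t => 1 - c t * I t) =ᶠ[𝓝 t₀] f := by
      filter_upwards [isOpen_Ioo.mem_nhds ht₀] with t ht
      exact (hfc t ht).symm
    exact (hca.congr heq).continuousWithinAt
  -- limit at 0
  have h0 : ContinuousWithinAt f (Set.Icc (0:ℝ) 1) 0 := by
    have htend : Tendsto f (𝓝[Set.Ioo (0:ℝ) 1] 0) (𝓝 0) := by
      have hctend : Tendsto c (𝓝[Set.Ioo (0:ℝ) 1] 0) (𝓝 0) := by
        have := (hc_cont.tendsto 0).mono_left
          (nhdsWithin_le_nhds (s := Set.Ioo (0:ℝ) 1))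
        rwa [hc0] at this
      have hbdd : IsBoundedUnder (· ≤ ·) (𝓝[Set.Ioo (0:ℝ) 1] 0) (norm ∘ J) := by
        refine ⟨K₀, ?_⟩
        rw [eventually_map]
        have hmem : Set.Iio (1/2:ℝ) ∈ 𝓝[Set.Ioo (0:ℝ) 1] (0:ℝ) :=
          nhdsWithin_le_nhds (Iio_mem_nhds (by norm_num))
        filter_upwards [eventually_mem_nhdsWithin, hmem] with t ht ht2
        exact hJbdd t ht.1 (le_of_lt ht2)
      have hcJ : Tendsto (fun t => c t * J t) (𝓝[Set.Ioo (0:ℝ) 1] 0) (𝓝 0) :=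
        hctend.zero_mul_isBoundedUnder_le hbdd
      refine hcJ.congr' ?_
      filter_upwards [eventually_mem_nhdsWithin] with t ht
      rw [hfc t ht, hkey t ht]
      ring
    have hsub : insert (0:ℝ) (Set.Ioo (0:ℝ) 1) ∈ 𝓝[Set.Icc (0:ℝ) 1] (0:ℝ) := by
      rw [mem_nhdsWithin]
      refine ⟨Set.Iio 1, isOpen_Iio, by norm_num, ?_⟩
      rintro x ⟨hx1, hx0, _⟩
      rcases eq_or_lt_of_le hx0 with h | h
      · exact Or.inl h.symm
      · exact Or.inr ⟨h, hx1⟩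
    have : Tendsto f (𝓝[insert (0:ℝ) (Set.Ioo (0:ℝ) 1)] 0) (𝓝 0) := by
      rw [nhdsWithin_insert]
      refine Tendsto.sup ?_ htend
      have := tendsto_pure_nhds f 0
      rwa [hf0] at this
    have h' : Tendsto f (𝓝[Set.Icc (0:ℝ) 1] 0) (𝓝 0) :=
      this.mono_left (nhdsWithin_le_of_mem hsub)
    rw [ContinuousWithinAt, hf0]
    exact h'
  -- limit at 1
  have h1 : ContinuousWithinAt f (Set.Icc (0:ℝ) 1) 1 := by
    have htend : Tendsto f (𝓝[Set.Ioo (0:ℝ) 1] 1) (𝓝 1) := by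
      have hctend : Tendsto c (𝓝[Set.Ioo (0:ℝ) 1] 1) (𝓝 0) := by
        have := (hc_cont.tendsto 1).mono_left
          (nhdsWithin_le_nhds (s := Set.Ioo (0:ℝ) 1))
        rwa [hc1] at this
      have hbdd : IsBoundedUnder (· ≤ ·) (𝓝[Set.Ioo (0:ℝ) 1] 1) (norm ∘ I) := by
        refine ⟨K₁, ?_⟩
        rw [eventually_map]
        have hmem : Set.Ioi (1/2:ℝ) ∈ 𝓝[Set.Ioo (0:ℝ) 1] (1:ℝ) :=
          nhdsWithin_le_nhds (Ioi_mem_nhds (by norm_num))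
        filter_upwards [eventually_mem_nhdsWithin, hmem] with t ht ht2
        exact hIbdd t (le_of_lt ht2) ht.2.le
      have hcI : Tendsto (fun t => c t * I t) (𝓝[Set.Ioo (0:ℝ) 1] 1) (𝓝 0) :=
        hctend.zero_mul_isBoundedUnder_le hbdd
      have : Tendsto (fun t => 1 - c t * I t) (𝓝[Set.Ioo (0:ℝ) 1] 1) (𝓝 1) := by
        have := (tendsto_const_nhds (x := (1:ℝ)) (f := 𝓝[Set.Ioo (0:ℝ) 1] (1:ℝ))).sub hcI
        simpa using this
      refine this.congr' ?_
      filter_upwards [eventually_mem_nhdsWithin] with t ht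
      exact (hfc t ht).symm
    have hsub : insert (1:ℝ) (Set.Ioo (0:ℝ) 1) ∈ 𝓝[Set.Icc (0:ℝ) 1] (1:ℝ) := by
      rw [mem_nhdsWithin]
      refine ⟨Set.Ioi 0, isOpen_Ioi, by norm_num, ?_⟩
      rintro x ⟨hx0, _, hx1⟩
      rcases eq_or_lt_of_le hx1 with h | h
      · exact Or.inl h
      · exact Or.inr ⟨hx0, h⟩
    have : Tendsto f (𝓝[insert (1:ℝ) (Set.Ioo (0:ℝ) 1)] 1) (𝓝 1) := by
      rw [nhdsWithin_insert]
      refine Tendsto.sup ?_ htend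
      have := tendsto_pure_nhds f 1
      rwa [hf1] at this
    have h' : Tendsto f (𝓝[Set.Icc (0:ℝ) 1] 1) (𝓝 1) :=
      this.mono_left (nhdsWithin_le_of_mem hsub)
    rw [ContinuousWithinAt, hf1]
    exact h'
  -- assemble
  intro t ht
  rcases eq_or_lt_of_le ht.1 with h0' | h0'
  · rw [← h0']; exact h0
  rcases eq_or_lt_of_le ht.2 with h1' | h1'
  · rw [h1']; exact h1
  exact hint t ⟨h0', h1'⟩
end

section
/- Fix an integer n ≥ 1, ρ ∈ (1,n) and an integer k with 0 ≤ k ≤ n−1, and set τ = (n−ρ)/(ρ−1) > 0. Define f : [0,1] → ℝ by f(0) = 0, f(1) = 1 and, for t ∈ (0,1), f(t) = 1 − ∑_{s=0}^{k} C(n,s) Γ(s+tτ) Γ(n−s+(1−t)τ) Γ(τ) / (Γ(n+τ) Γ(tτ) Γ((1−t)τ)), i.e., f(t) is the survival function of the Beta-Binomial(n, tτ, (1−t)τ) distribution evaluated at k, with the convention that the distribution is degenerate at 0 for t = 0 and degenerate at n for t = 1. Then f is continuous on [0,1]. -/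
/-- Gamma recursion iterated: `Γ(x + s) = Γ(x) * ∏_{j<s} (x + j)` for `x > 0`. -/
lemma gamma_add_nat_aux (x : ℝ) (hx : 0 < x) (s : ℕ) :
    Real.Gamma (x + s) = Real.Gamma x * ∏ j ∈ Finset.range s, (x + j) := by
  induction s with
  | zero => simp
  | succ s ih =>
    have hne : x + (s : ℝ) ≠ 0 := by positivity
    have : x + ((s : ℝ) + 1) = (x + s) + 1 := by ring
    rw [Nat.cast_succ, this, Real.Gamma_add_one hne, ih, Finset.prod_range_succ]
    ring

/-- Lemma B.3 of the paper: the beta-binomial survival function `t ↦ B̄_{n,t,ρ}(k)` (the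
survival function of the `Beta-Binomial(n, tτ, (1−t)τ)` distribution at `k`, with
`τ = (n−ρ)/(ρ−1)`, degenerate at `0` for `t = 0` and at `n` for `t = 1`) is continuous on
`[0,1]`. -/
theorem continuousOn_betaBinomial_survival (n k : ℕ) (hn : 1 ≤ n) (hk : k ≤ n - 1)
    (ρ : ℝ) (hρ : ρ ∈ Set.Ioo (1 : ℝ) n) (τ : ℝ) (hτ : τ = ((n : ℝ) - ρ) / (ρ - 1))
    (f : ℝ → ℝ) (hf0 : f 0 = 0) (hf1 : f 1 = 1)
    (hf : ∀ t ∈ Set.Ioo (0 : ℝ) 1,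
      f t = 1 - ∑ s ∈ Finset.range (k + 1),
        (n.choose s : ℝ) * Real.Gamma ((s : ℝ) + t * τ) * Real.Gamma ((n : ℝ) - s + (1 - t) * τ) *
          Real.Gamma τ /
        (Real.Gamma ((n : ℝ) + τ) * Real.Gamma (t * τ) * Real.Gamma ((1 - t) * τ))) :
    ContinuousOn f (Set.Icc (0 : ℝ) 1) := by
  obtain ⟨hρ1, hρn⟩ := hρ
  have hτpos : 0 < τ := by
    rw [hτ]
    exact div_pos (by linarith) (by linarith)
  have hΓτ : Real.Gamma τ ≠ 0 := (Real.Gamma_pos_of_pos hτpos).ne'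
  have hΓnτ : Real.Gamma ((n : ℝ) + τ) ≠ 0 :=
    (Real.Gamma_pos_of_pos (by positivity)).ne'
  set g : ℝ → ℝ := fun t => 1 - ∑ s ∈ Finset.range (k + 1),
      (n.choose s : ℝ) * (∏ j ∈ Finset.range s, (t * τ + j)) *
        (∏ j ∈ Finset.range (n - s), ((1 - t) * τ + j)) *
        Real.Gamma τ / Real.Gamma ((n : ℝ) + τ) with hg
  have hgcont : Continuous g := by
    apply Continuous.sub continuous_const
    apply continuous_finset_sum
    intro s _
    apply Continuous.div_const
    apply Continuous.mul _ continuous_const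
    apply Continuous.mul
    · exact continuous_const.mul (continuous_finset_prod _ (fun j _ => by continuity))
    · exact continuous_finset_prod _ (fun j _ => by continuity)
  have hsn : ∀ s ∈ Finset.range (k + 1), s ≤ n - 1 := fun s hs => by
    have := Finset.mem_range.mp hs; omega
  have heq : Set.EqOn f g (Set.Icc (0 : ℝ) 1) := by
    intro t ht
    obtain ⟨ht0, ht1⟩ := ht
    rcases eq_or_lt_of_le ht0 with h0 | h0
    · -- t = 0
      rw [← h0, hf0, hg]
      simp only
      rw [Finset.sum_eq_single 0]
      · have hprod : ∏ j ∈ Finset.range (n - 0), ((1 - (0:ℝ)) * τ + j)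
            = Real.Gamma (τ + n) / Real.Gamma τ := by
          rw [gamma_add_nat_aux τ hτpos n, mul_div_cancel_left₀ _ hΓτ, Nat.sub_zero]
          norm_num
        simp only [Nat.choose_zero_right, Nat.cast_one, Finset.range_zero,
          Finset.prod_empty, one_mul, mul_one]
        rw [hprod, add_comm ((n:ℝ)) τ]
        field_simp
        norm_num
      · intro s hs hs0
        have : (0 : ℕ) ∈ Finset.range s := Finset.mem_range.mpr (Nat.pos_of_ne_zero hs0)
        rw [Finset.prod_eq_zero this (by norm_num)]
        simp
      · intro h; exact absurd (Finset.mem_range.mpr (Nat.succ_pos k)) h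
    rcases eq_or_lt_of_le ht1 with h1 | h1
    · -- t = 1
      rw [h1, hf1, hg]
      simp only
      rw [Finset.sum_eq_zero, sub_zero]
      intro s hs
      have hsn' : s ≤ n - 1 := hsn s hs
      have : (0 : ℕ) ∈ Finset.range (n - s) := Finset.mem_range.mpr (by omega)
      rw [Finset.prod_eq_zero this (by norm_num)]
      simp
    · -- t ∈ (0,1)
      rw [hf t ⟨h0, h1⟩, hg]
      simp only
      congr 1
      refine Finset.sum_congr rfl (fun s hs => ?_)
      have hsle : s ≤ n := le_trans (hsn s hs) (Nat.sub_le n 1)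
      have htτ : 0 < t * τ := mul_pos h0 hτpos
      have h1tτ : 0 < (1 - t) * τ := mul_pos (by linarith) hτpos
      have hΓ1 : Real.Gamma (t * τ) ≠ 0 := (Real.Gamma_pos_of_pos htτ).ne'
      have hΓ2 : Real.Gamma ((1 - t) * τ) ≠ 0 := (Real.Gamma_pos_of_pos h1tτ).ne'
      have e1 : Real.Gamma ((s : ℝ) + t * τ)
          = Real.Gamma (t * τ) * ∏ j ∈ Finset.range s, (t * τ + j) := by
        rw [← gamma_add_nat_aux (t * τ) htτ s]; ring_nf
      have e2 : Real.Gamma ((n : ℝ) - s + (1 - t) * τ)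
          = Real.Gamma ((1 - t) * τ) * ∏ j ∈ Finset.range (n - s), ((1 - t) * τ + j) := by
        rw [← gamma_add_nat_aux ((1 - t) * τ) h1tτ (n - s)]
        congr 1
        push_cast [Nat.cast_sub hsle]
        ring
      rw [e1, e2]
      field_simp
  exact hgcont.continuousOn.congr heq
end

section
/- Fix an integer n ≥ 1, ρ ∈ (0,n) and w ∈ (0,1), and set τ = (n−ρ)/ρ > 0. Let f : [0,1] → ℝ be given by f(0) = 0, f(1) = 1 and, for t ∈ (0,1), f(t) = (∫_w^1 x^{tτ−1}(1−x)^{(1−t)τ−1} dx) / (∫_0^1 x^{tτ−1}(1−x)^{(1−t)τ−1} dx), i.e., f(t) is the survival function of the Beta(tτ, (1−t)τ) distribution evaluated at w. Then f is monotone (nondecreasing) on [0,1]: f(t_1) ≤ f(t_2) whenever 0 ≤ t_1 ≤ t_2 ≤ 1. -/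
open MeasureTheory Set intervalIntegral

lemma betaIntegrable {a b : ℝ} (ha : 0 < a) (hb : 0 < b) :
    IntervalIntegrable (fun x : ℝ => x ^ (a - 1) * (1 - x) ^ (b - 1)) volume 0 1 := by
  have hc := Complex.betaIntegral_convergent (u := (a:ℂ)) (v := (b:ℂ)) (by simpa) (by simpa)
  rw [intervalIntegrable_iff_integrableOn_Ioc_of_le zero_le_one] at hc ⊢
  refine hc.re.congr ?_
  rw [Filter.EventuallyEq, ae_restrict_iff' measurableSet_Ioc]
  filter_upwards with x hx
  obtain ⟨hx0, hx1⟩ := hx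
  rw [eq_comm, show ((a:ℂ) - 1) = ((a - 1 : ℝ) : ℂ) by push_cast; ring,
     show ((b:ℂ) - 1) = ((b - 1 : ℝ) : ℂ) by push_cast; ring,
     ← Complex.ofReal_cpow hx0.le, show (1 - (x:ℂ)) = ((1 - x : ℝ) : ℂ) by push_cast; ring,
     ← Complex.ofReal_cpow (by linarith), ← Complex.ofReal_mul]
  simp

/-- Lemma B.5 of the paper: the beta survival function `t ↦ β̄_{n,t,ρ}(w)` (the survival
function of the `Beta(tτ, (1−t)τ)` distribution at `w`, with `τ = (n−ρ)/ρ`, degenerate at `0`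
for `t = 0` and at `1` for `t = 1`) is nondecreasing on `[0,1]`. -/
theorem beta_survival_mono (n : ℕ) (hn : 1 ≤ n) (ρ : ℝ) (hρ : ρ ∈ Set.Ioo (0 : ℝ) n)
    (w : ℝ) (hw : w ∈ Set.Ioo (0 : ℝ) 1) (τ : ℝ) (hτ : τ = ((n : ℝ) - ρ) / ρ)
    (f : ℝ → ℝ) (hf0 : f 0 = 0) (hf1 : f 1 = 1)
    (hf : ∀ t ∈ Set.Ioo (0 : ℝ) 1,
      f t = (∫ x in w..1, x ^ (t * τ - 1) * (1 - x) ^ ((1 - t) * τ - 1)) /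
        ∫ x in (0 : ℝ)..1, x ^ (t * τ - 1) * (1 - x) ^ ((1 - t) * τ - 1)) :
    ∀ t₁ t₂ : ℝ, 0 ≤ t₁ → t₁ ≤ t₂ → t₂ ≤ 1 → f t₁ ≤ f t₂ := by
  obtain ⟨hρ0, hρn⟩ := hρ
  obtain ⟨hw0, hw1⟩ := hw
  have hτ0 : 0 < τ := by rw [hτ]; exact div_pos (by linarith) hρ0
  set g : ℝ → ℝ → ℝ := fun t x => x ^ (t * τ - 1) * (1 - x) ^ ((1 - t) * τ - 1) with hg
  have hint : ∀ t ∈ Ioo (0:ℝ) 1, IntervalIntegrable (g t) volume 0 1 := by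
    intro t ht
    have := betaIntegrable (a := t * τ) (b := (1 - t) * τ)
      (mul_pos ht.1 hτ0) (mul_pos (by linarith [ht.2]) hτ0)
    simpa [hg] using this
  have hsub : ∀ t ∈ Ioo (0:ℝ) 1, ∀ u v : ℝ, u ∈ Icc (0:ℝ) 1 → v ∈ Icc (0:ℝ) 1 →
      IntervalIntegrable (g t) volume u v := by
    intro t ht u v hu hv
    refine (hint t ht).mono_set ?_
    rw [show Icc (0:ℝ) 1 = uIcc (0:ℝ) 1 by rw [uIcc_of_le zero_le_one]] at hu hv
    exact uIcc_subset_uIcc hu hv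
  have hwmem : w ∈ Icc (0:ℝ) 1 := ⟨hw0.le, hw1.le⟩
  have h0mem : (0:ℝ) ∈ Icc (0:ℝ) 1 := ⟨le_refl _, zero_le_one⟩
  have h1mem : (1:ℝ) ∈ Icc (0:ℝ) 1 := ⟨zero_le_one, le_refl _⟩
  have hnn : ∀ t : ℝ, ∀ x ∈ Icc (0:ℝ) 1, 0 ≤ g t x := fun t x hx =>
    mul_nonneg (Real.rpow_nonneg hx.1 _) (Real.rpow_nonneg (by linarith [hx.2]) _)
  set A : ℝ → ℝ := fun t => ∫ x in w..1, g t x with hA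
  set B : ℝ → ℝ := fun t => ∫ x in (0:ℝ)..w, g t x with hB
  have hfval : ∀ t ∈ Ioo (0:ℝ) 1, f t = A t / (B t + A t) := by
    intro t ht
    rw [hf t ht,
      show (∫ x in (0:ℝ)..1, x ^ (t * τ - 1) * (1 - x) ^ ((1 - t) * τ - 1)) = B t + A t from
        (integral_add_adjacent_intervals (hsub t ht 0 w h0mem hwmem)
          (hsub t ht w 1 hwmem h1mem)).symm]
  have hApos : ∀ t ∈ Ioo (0:ℝ) 1, 0 < A t := by
    intro t ht
    refine intervalIntegral_pos_of_pos_on (hsub t ht w 1 hwmem h1mem) ?_ hw1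
    intro x hx
    exact mul_pos (Real.rpow_pos_of_pos (lt_trans hw0 hx.1) _)
      (Real.rpow_pos_of_pos (by linarith [hx.2]) _)
  have hBnn : ∀ t ∈ Ioo (0:ℝ) 1, 0 ≤ B t := by
    intro t ht
    refine intervalIntegral.integral_nonneg hw0.le fun x hx => hnn t x ⟨hx.1, hx.2.trans hw1.le⟩
  have hf01 : ∀ t : ℝ, 0 ≤ t → t ≤ 1 → 0 ≤ f t ∧ f t ≤ 1 := by
    intro t h0 h1
    rcases h0.eq_or_lt with rfl | h0'
    · simp [hf0]
    rcases h1.eq_or_lt with rfl | h1'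
    · simp [hf1]
    have ht : t ∈ Ioo (0:ℝ) 1 := ⟨h0', h1'⟩
    have hA' := hApos t ht
    have hB' := hBnn t ht
    rw [hfval t ht]
    constructor
    · positivity
    · rw [div_le_one (by linarith)]; linarith
  have hmain : ∀ t₁ t₂ : ℝ, t₁ ∈ Ioo (0:ℝ) 1 → t₂ ∈ Ioo (0:ℝ) 1 → t₁ ≤ t₂ → f t₁ ≤ f t₂ := by
    intro t₁ t₂ ht₁ ht₂ h12
    set δ := (t₂ - t₁) * τ with hδ
    have hδ0 : 0 ≤ δ := mul_nonneg (by linarith) hτ0.le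
    set r := (w / (1 - w)) ^ δ with hr
    have hrpos : 0 < r := Real.rpow_pos_of_pos (div_pos hw0 (by linarith)) δ
    have hratio : ∀ x : ℝ, 0 < x → x < 1 → g t₂ x = g t₁ x * (x / (1 - x)) ^ δ := by
      intro x hx0 hx1
      have h1x : 0 < 1 - x := by linarith
      show x ^ (t₂ * τ - 1) * (1 - x) ^ ((1 - t₂) * τ - 1) = _
      rw [Real.div_rpow hx0.le h1x.le,
        show t₂ * τ - 1 = (t₁ * τ - 1) + δ by rw [hδ]; ring,
        show (1 - t₂) * τ - 1 = ((1 - t₁) * τ - 1) - δ by rw [hδ]; ring,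
        Real.rpow_add hx0, Real.rpow_sub h1x]
      have hd : (1 - x) ^ δ ≠ 0 := (Real.rpow_pos_of_pos h1x δ).ne'
      simp only [hg]
      field_simp
    have haene : ∀ c : ℝ, ∀ S : Set ℝ, ∀ᵐ x : ℝ ∂(volume.restrict S), x ≠ c := by
      intro c S
      refine ae_restrict_of_ae ?_
      rw [ae_iff]
      simp only [not_not, setOf_eq_eq_singleton]
      exact measure_singleton c
    have hB2 : B t₂ ≤ r * B t₁ := by
      rw [show r * B t₁ = ∫ x in (0:ℝ)..w, r * g t₁ x from
        (intervalIntegral.integral_const_mul r _).symm]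
      refine integral_mono_ae_restrict hw0.le (hsub t₂ ht₂ 0 w h0mem hwmem)
        ((hsub t₁ ht₁ 0 w h0mem hwmem).const_mul r) ?_
      filter_upwards [ae_restrict_mem measurableSet_Icc, haene 0 (Icc 0 w)] with x hx hx0
      have hx0' : 0 < x := lt_of_le_of_ne hx.1 (Ne.symm hx0)
      have hx1 : x < 1 := lt_of_le_of_lt hx.2 hw1
      rw [hratio x hx0' hx1, mul_comm r]
      refine mul_le_mul_of_nonneg_left ?_ (hnn t₁ x ⟨hx0'.le, hx1.le⟩)
      refine Real.rpow_le_rpow (div_nonneg hx0'.le (by linarith)) ?_ hδ0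
      exact div_le_div₀ hw0.le hx.2 (by linarith) (by linarith [hx.2])
    have hA2 : r * A t₁ ≤ A t₂ := by
      rw [show r * A t₁ = ∫ x in w..1, r * g t₁ x from
        (intervalIntegral.integral_const_mul r _).symm]
      refine integral_mono_ae_restrict hw1.le ((hsub t₁ ht₁ w 1 hwmem h1mem).const_mul r)
        (hsub t₂ ht₂ w 1 hwmem h1mem) ?_
      filter_upwards [ae_restrict_mem measurableSet_Icc, haene 1 (Icc w 1)] with x hx hx1
      have hx1' : x < 1 := lt_of_le_of_ne hx.2 hx1
      have hx0 : 0 < x := lt_of_lt_of_le hw0 hx.1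
      rw [hratio x hx0 hx1', mul_comm r]
      refine mul_le_mul_of_nonneg_left ?_ (hnn t₁ x ⟨hx0.le, hx1'.le⟩)
      refine Real.rpow_le_rpow (div_nonneg hw0.le (by linarith)) ?_ hδ0
      exact div_le_div₀ hx0.le hx.1 (by linarith) (by linarith [hx.1])
    have hA1 := hApos t₁ ht₁
    have hB1 := hBnn t₁ ht₁
    have hA2' := hApos t₂ ht₂
    have hB2' := hBnn t₂ ht₂
    rw [hfval t₁ ht₁, hfval t₂ ht₂, div_le_div_iff₀ (by linarith) (by linarith)]
    nlinarith [mul_le_mul_of_nonneg_left hB2 hA1.le,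
      mul_le_mul_of_nonneg_right hA2 hB1]
  intro t₁ t₂ h0 h12 h21
  rcases h0.eq_or_lt with rfl | h0'
  · rw [hf0]; exact (hf01 t₂ (by linarith) h21).1
  rcases h21.eq_or_lt with rfl | h21'
  · rw [hf1]; exact (hf01 t₁ h0 h12).2
  exact hmain t₁ t₂ ⟨h0', lt_of_le_of_lt h12 h21'⟩ ⟨lt_of_lt_of_le h0' h12, h21'⟩ h12
end

section
/- Fix an integer n ≥ 1, ρ ∈ (1,n) and an integer k with 0 ≤ k ≤ n−1, and set τ = (n−ρ)/(ρ−1) > 0. Let f : [0,1] → ℝ be given by f(0) = 0, f(1) = 1 and, for t ∈ (0,1), f(t) = 1 − ∑_{s=0}^{k} C(n,s) Γ(s+tτ) Γ(n−s+(1−t)τ) Γ(τ) / (Γ(n+τ) Γ(tτ) Γ((1−t)τ)), i.e., f(t) is the survival function of the Beta-Binomial(n, tτ, (1−t)τ) distribution evaluated at k. Then f is monotone (nondecreasing) on [0,1]: f(t_1) ≤ f(t_2) whenever 0 ≤ t_1 ≤ t_2 ≤ 1. -/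
open MeasureTheory Set Real Finset

lemma BB.complex_eq {a b x : ℝ} (hx : 0 ≤ x) (hx1 : x ≤ 1) :
    ((x ^ (a-1) * (1-x) ^ (b-1) : ℝ) : ℂ)
      = (x : ℂ) ^ ((a : ℂ) - 1) * ((1 : ℂ) - x) ^ ((b : ℂ) - 1) := by
  have h1 : ((x ^ (a-1) : ℝ) : ℂ) = (x : ℂ) ^ ((a : ℂ) - 1) := by
    rw [Complex.ofReal_cpow hx]; push_cast; ring_nf
  have h2 : (((1-x) ^ (b-1) : ℝ) : ℂ) = ((1 : ℂ) - x) ^ ((b : ℂ) - 1) := by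
    rw [Complex.ofReal_cpow (by linarith)]; push_cast; ring_nf
  rw [Complex.ofReal_mul, h1, h2]

lemma BB.intervalIntegrable_W {a b : ℝ} (ha : 0 < a) (hb : 0 < b) :
    IntervalIntegrable (fun p : ℝ => p ^ (a-1) * (1-p) ^ (b-1)) volume 0 1 := by
  have hC := Complex.betaIntegral_convergent (u := a) (v := b) (by simpa) (by simpa)
  rw [intervalIntegrable_iff] at hC ⊢
  have h2 : IntegrableOn (fun x : ℝ =>
      ((x : ℂ) ^ ((a:ℂ) - 1) * ((1:ℂ) - x) ^ ((b:ℂ) - 1)).re) (Set.uIoc (0:ℝ) 1) volume := hC.re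
  refine h2.congr_fun (fun x hx => ?_) measurableSet_uIoc
  rw [Set.uIoc_of_le (by norm_num : (0:ℝ) ≤ 1)] at hx
  beta_reduce
  rw [← BB.complex_eq hx.1.le hx.2, Complex.ofReal_re]

lemma BB.integral_W {a b : ℝ} (ha : 0 < a) (hb : 0 < b) :
    ∫ p in (0:ℝ)..1, p ^ (a-1) * (1-p) ^ (b-1) = Gamma a * Gamma b / Gamma (a+b) := by
  have key := Complex.Gamma_mul_Gamma_eq_betaIntegral (s := a) (t := b) (by simpa) (by simpa)
  have hβ : Complex.betaIntegral a b = ((∫ p in (0:ℝ)..1, p ^ (a-1) * (1-p) ^ (b-1) : ℝ) : ℂ) := by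
    rw [Complex.betaIntegral, ← intervalIntegral.integral_ofReal]
    refine intervalIntegral.integral_congr (fun x hx => ?_)
    rw [Set.uIcc_of_le (by norm_num : (0:ℝ) ≤ 1)] at hx
    exact (BB.complex_eq hx.1 hx.2).symm
  rw [hβ, ← Complex.ofReal_add, Complex.Gamma_ofReal, Complex.Gamma_ofReal,
    Complex.Gamma_ofReal, ← Complex.ofReal_mul, ← Complex.ofReal_mul] at key
  have := Complex.ofReal_injective key
  rw [eq_div_iff (Real.Gamma_pos_of_pos (by linarith)).ne']
  linarith [this]

lemma BB.hasDerivAt_one_sub_pow (j : ℕ) (p : ℝ) :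
    HasDerivAt (fun q : ℝ => (1-q)^j) (-(j * (1-p)^(j-1))) p := by
  have h := (hasDerivAt_pow j (1-p)).comp p ((hasDerivAt_id p).const_sub 1)
  simpa [mul_comm, Function.comp_def] using h

lemma BB.term_hasDerivAt (c : ℝ) (s j : ℕ) (p : ℝ) :
    HasDerivAt (fun q : ℝ => c * q^s * (1-q)^j)
      (c * (s * p^(s-1)) * (1-p)^j + c * p^s * (-(j * (1-p)^(j-1)))) p :=
  ((hasDerivAt_pow s p).const_mul c).mul (BB.hasDerivAt_one_sub_pow j p)

lemma BB.G_hasDerivAt (m : ℕ) : ∀ k, k ≤ m → ∀ p : ℝ,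
    HasDerivAt (fun q : ℝ => ∑ s ∈ Finset.range (k+1), ((m+1).choose s : ℝ) * q^s * (1-q)^(m+1-s))
      (-((m+1) * (m.choose k : ℝ) * p^k * (1-p)^(m-k))) p := by
  intro k
  induction k with
  | zero =>
    intro _ p
    have h := BB.hasDerivAt_one_sub_pow (m+1) p
    have hfun : (fun q : ℝ => ∑ s ∈ range 1, ((m+1).choose s : ℝ) * q^s * (1-q)^(m+1-s))
        = fun q : ℝ => (1-q)^(m+1) := by
      funext q; simp
    rw [hfun]
    convert h using 1
    simp only [Nat.choose_zero_right, Nat.sub_zero, Nat.add_sub_cancel, Nat.cast_one, pow_zero]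
    push_cast
    ring
  | succ k ih =>
    intro hk p
    have hk' : k ≤ m := le_of_lt hk
    have hfun : (fun q : ℝ => ∑ s ∈ Finset.range (k+1+1), ((m+1).choose s : ℝ) * q^s * (1-q)^(m+1-s))
        = fun q : ℝ => (∑ s ∈ Finset.range (k+1), ((m+1).choose s : ℝ) * q^s * (1-q)^(m+1-s))
            + ((m+1).choose (k+1) : ℝ) * q^(k+1) * (1-q)^(m-k) := by
      funext q
      rw [Finset.sum_range_succ]
      congr 3
      omega
    rw [hfun]
    have hd := (ih hk' p).add (BB.term_hasDerivAt ((m+1).choose (k+1) : ℝ) (k+1) (m-k) p)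
    refine hd.congr_deriv (Eq.symm ?_)
    have h1 : ((m+1).choose (k+1) : ℝ) * ((k:ℝ)+1) = ((m:ℝ)+1) * (m.choose k : ℝ) := by
      have e := congrArg (Nat.cast : ℕ → ℝ) (Nat.add_one_mul_choose_eq m k)
      push_cast at e
      linarith
    have h2 : ((m+1).choose (k+1) : ℝ) * ((m:ℝ) - k) = ((m:ℝ)+1) * (m.choose (k+1) : ℝ) := by
      have e1 := congrArg (Nat.cast : ℕ → ℝ) (Nat.choose_succ_right_eq (m+1) (k+1))
      have e2 := congrArg (Nat.cast : ℕ → ℝ) (Nat.add_one_mul_choose_eq m (k+1))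
      push_cast at e1 e2
      rw [Nat.cast_sub hk'] at e1
      linear_combination -e1 - e2
    have hc : ((m - k : ℕ) : ℝ) = (m:ℝ) - k := Nat.cast_sub hk'
    rw [hc]
    obtain ⟨e, he1, he2, he3⟩ : ∃ e, m - (k+1) = e ∧ m - k - 1 = e ∧ m - k = e + 1 :=
      ⟨m - (k+1), rfl, by omega, by omega⟩
    rw [he1, he2, he3]
    push_cast
    linear_combination (p^(k+1)*(1-p)^e) * h2 - (p^k*(1-p)^(e+1)) * h1

lemma BB.G_antitoneOn (m k : ℕ) (hk : k ≤ m) :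
    AntitoneOn (fun q : ℝ => ∑ s ∈ Finset.range (k+1), ((m+1).choose s : ℝ) * q^s * (1-q)^(m+1-s))
      (Set.Icc (0:ℝ) 1) := by
  apply antitoneOn_of_deriv_nonpos (convex_Icc 0 1)
  · apply Continuous.continuousOn; fun_prop
  · intro x hx
    exact ((BB.G_hasDerivAt m k hk x).differentiableAt).differentiableWithinAt
  · intro x hx
    rw [interior_Icc] at hx
    rw [(BB.G_hasDerivAt m k hk x).deriv]
    have h1 : (0:ℝ) ≤ x := hx.1.le
    have h2 : (0:ℝ) ≤ 1 - x := by linarith [hx.2]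
    have h3 : (0:ℝ) ≤ ((m+1 : ℕ) : ℝ) * (m.choose k : ℝ) * x^k * (1-x)^(m-k) := by positivity
    push_cast at h3
    linarith

lemma BB.G_continuousOn (m k : ℕ) :
    ContinuousOn (fun q : ℝ => ∑ s ∈ Finset.range (k+1), ((m+1).choose s : ℝ) * q^s * (1-q)^(m+1-s))
      (Set.Icc (0:ℝ) 1) := by
  apply Continuous.continuousOn; fun_prop

lemma BB.G_nonneg (m k : ℕ) {q : ℝ} (h0 : 0 ≤ q) (h1 : q ≤ 1) :
    0 ≤ ∑ s ∈ Finset.range (k+1), ((m+1).choose s : ℝ) * q^s * (1-q)^(m+1-s) := by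
  apply Finset.sum_nonneg
  intro s _
  have : (0:ℝ) ≤ 1 - q := by linarith
  positivity

lemma BB.G_le_one (m k : ℕ) (hk : k ≤ m) {q : ℝ} (h0 : 0 ≤ q) (h1 : q ≤ 1) :
    ∑ s ∈ Finset.range (k+1), ((m+1).choose s : ℝ) * q^s * (1-q)^(m+1-s) ≤ 1 := by
  have hq : (0:ℝ) ≤ 1 - q := by linarith
  have hpow := add_pow q (1-q) (m+1)
  simp only [add_sub_cancel, one_pow] at hpow
  calc ∑ s ∈ Finset.range (k+1), ((m+1).choose s : ℝ) * q^s * (1-q)^(m+1-s)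
      ≤ ∑ s ∈ Finset.range (m+1+1), ((m+1).choose s : ℝ) * q^s * (1-q)^(m+1-s) := by
        apply Finset.sum_le_sum_of_subset_of_nonneg
        · exact Finset.range_subset_range.2 (by omega)
        · intro s _ _; positivity
    _ = 1 := by
        refine (Finset.sum_congr rfl fun s _ => by ring).trans hpow.symm

lemma BB.integral_W_pos {a b : ℝ} (ha : 0 < a) (hb : 0 < b) :
    0 < ∫ p in (0:ℝ)..1, p ^ (a-1) * (1-p) ^ (b-1) := by
  rw [BB.integral_W ha hb]
  have := Real.Gamma_pos_of_pos ha
  have := Real.Gamma_pos_of_pos hb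
  have := Real.Gamma_pos_of_pos (by linarith : 0 < a + b)
  positivity

lemma BB.key (G : ℝ → ℝ) (hGa : AntitoneOn G (Set.Icc 0 1)) (hGc : ContinuousOn G (Set.Icc 0 1))
    {a₁ b₁ a₂ b₂ : ℝ} (ha₁ : 0 < a₁) (hb₁ : 0 < b₁) (ha₂ : 0 < a₂) (hb₂ : 0 < b₂)
    (hsum : a₁ + b₁ = a₂ + b₂) (hle : a₁ ≤ a₂) :
    (∫ p in (0:ℝ)..1, G p * (p ^ (a₂-1) * (1-p) ^ (b₂-1)))
        / (∫ p in (0:ℝ)..1, p ^ (a₂-1) * (1-p) ^ (b₂-1))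
      ≤ (∫ p in (0:ℝ)..1, G p * (p ^ (a₁-1) * (1-p) ^ (b₁-1)))
        / (∫ p in (0:ℝ)..1, p ^ (a₁-1) * (1-p) ^ (b₁-1)) := by
  rcases eq_or_lt_of_le hle with h | h
  · have hb : b₁ = b₂ := by linarith
    rw [h, hb]
  set W₁ : ℝ → ℝ := fun p => p ^ (a₁-1) * (1-p) ^ (b₁-1) with hW₁def
  set W₂ : ℝ → ℝ := fun p => p ^ (a₂-1) * (1-p) ^ (b₂-1) with hW₂def
  set B₁ : ℝ := ∫ p in (0:ℝ)..1, W₁ p with hB₁def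
  set B₂ : ℝ := ∫ p in (0:ℝ)..1, W₂ p with hB₂def
  have hB₁ : 0 < B₁ := BB.integral_W_pos ha₁ hb₁
  have hB₂ : 0 < B₂ := BB.integral_W_pos ha₂ hb₂
  set δ : ℝ := a₂ - a₁ with hδdef
  have hδ : 0 < δ := by simp [hδdef]; linarith
  set r : ℝ := (B₂ / B₁) ^ (1/δ) with hrdef
  have hr : 0 < r := Real.rpow_pos_of_pos (by positivity) _
  have hrδ : r ^ δ = B₂ / B₁ := by
    rw [hrdef, ← Real.rpow_mul (by positivity : (0:ℝ) ≤ B₂ / B₁), one_div,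
      inv_mul_cancel₀ hδ.ne', Real.rpow_one]
  set q : ℝ := r / (1 + r) with hqdef
  have hq0 : 0 < q := by positivity
  have hq1 : q < 1 := by
    rw [hqdef, div_lt_one (by positivity)]; linarith
  have hqr : q / (1 - q) = r := by
    rw [hqdef]
    have h1 : 1 - r / (1+r) = 1 / (1+r) := by field_simp; ring
    rw [h1]
    field_simp
  -- pointwise single-crossing inequality
  have hpt : ∀ p ∈ Set.Ioo (0:ℝ) 1, (G p - G q) * (W₂ p / B₂ - W₁ p / B₁) ≤ 0 := by
    intro p hp
    have hp0 : 0 < p := hp.1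
    have hp1 : 0 < 1 - p := by linarith [hp.2]
    have hW₁pos : 0 < W₁ p := by
      rw [hW₁def]; exact mul_pos (Real.rpow_pos_of_pos hp0 _) (Real.rpow_pos_of_pos hp1 _)
    have hfac : W₂ p = W₁ p * (p / (1-p)) ^ δ := by
      rw [hW₁def, hW₂def]
      simp only
      rw [Real.div_rpow hp0.le hp1.le]
      rw [show a₂ - 1 = (a₁ - 1) + δ from by rw [hδdef]; ring,
          show b₂ - 1 = (b₁ - 1) + (-δ) from by rw [hδdef]; linarith]
      rw [Real.rpow_add hp0, Real.rpow_add hp1, Real.rpow_neg hp1.le]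
      field_simp
    have hmono : ∀ x y : ℝ, 0 < x → x < 1 → 0 < y → y < 1 → x ≤ y →
        x / (1-x) ≤ y / (1-y) := by
      intro x y hx0 hx1 hy0 hy1 hxy
      rw [div_le_div_iff₀ (by linarith) (by linarith)]
      nlinarith
    rcases le_total p q with hpq | hpq
    · -- W₂ p / B₂ ≤ W₁ p / B₁ and G p ≥ G q
      have hratio : p / (1-p) ≤ r := by
        rw [← hqr]; exact hmono p q hp0 hp.2 hq0 hq1 hpq
      have hpow : (p / (1-p)) ^ δ ≤ B₂ / B₁ := by
        rw [← hrδ]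
        exact Real.rpow_le_rpow (by positivity) hratio hδ.le
      have hD : W₂ p / B₂ - W₁ p / B₁ ≤ 0 := by
        rw [sub_nonpos, div_le_div_iff₀ hB₂ hB₁, hfac]
        calc W₁ p * (p / (1-p)) ^ δ * B₁ ≤ W₁ p * (B₂ / B₁) * B₁ := by
              apply mul_le_mul_of_nonneg_right _ hB₁.le
              exact mul_le_mul_of_nonneg_left hpow hW₁pos.le
          _ = W₁ p * B₂ := by field_simp
      have hG : 0 ≤ G p - G q := by
        have := hGa (Set.mem_Icc.2 ⟨hp0.le, hp.2.le⟩) (Set.mem_Icc.2 ⟨hq0.le, hq1.le⟩) hpq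
        linarith
      exact mul_nonpos_of_nonneg_of_nonpos hG hD
    · have hratio : r ≤ p / (1-p) := by
        rw [← hqr]; exact hmono q p hq0 hq1 hp0 hp.2 hpq
      have hpow : B₂ / B₁ ≤ (p / (1-p)) ^ δ := by
        rw [← hrδ]
        exact Real.rpow_le_rpow hr.le hratio hδ.le
      have hD : 0 ≤ W₂ p / B₂ - W₁ p / B₁ := by
        rw [sub_nonneg, div_le_div_iff₀ hB₁ hB₂, hfac]
        calc W₁ p * B₂ = W₁ p * (B₂ / B₁) * B₁ := by field_simp
          _ ≤ W₁ p * (p / (1-p)) ^ δ * B₁ := by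
              apply mul_le_mul_of_nonneg_right _ hB₁.le
              exact mul_le_mul_of_nonneg_left hpow hW₁pos.le
      have hG : G p - G q ≤ 0 := by
        have := hGa (Set.mem_Icc.2 ⟨hq0.le, hq1.le⟩) (Set.mem_Icc.2 ⟨hp0.le, hp.2.le⟩) hpq
        linarith
      exact mul_nonpos_of_nonpos_of_nonneg hG hD
  -- integrability
  have hGc' : ContinuousOn G (uIcc (0:ℝ) 1) := by rwa [Set.uIcc_of_le (by norm_num : (0:ℝ) ≤ 1)]
  have hW₁int : IntervalIntegrable W₁ volume 0 1 := BB.intervalIntegrable_W ha₁ hb₁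
  have hW₂int : IntervalIntegrable W₂ volume 0 1 := BB.intervalIntegrable_W ha₂ hb₂
  have hGW₁ : IntervalIntegrable (fun p => G p * W₁ p) volume 0 1 := hW₁int.continuousOn_mul hGc'
  have hGW₂ : IntervalIntegrable (fun p => G p * W₂ p) volume 0 1 := hW₂int.continuousOn_mul hGc'
  -- the integral of the nonpositive function
  have hfint : IntervalIntegrable
      (fun p => (G p - G q) * (W₂ p / B₂ - W₁ p / B₁)) volume 0 1 := by
    have : (fun p => (G p - G q) * (W₂ p / B₂ - W₁ p / B₁))
        = fun p => ((G p * W₂ p) / B₂ - (G p * W₁ p) / B₁)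
            - (G q * (W₂ p / B₂) - G q * (W₁ p / B₁)) := by
      funext p; ring
    rw [this]
    exact ((hGW₂.div_const B₂).sub (hGW₁.div_const B₁)).sub
      (((hW₂int.div_const B₂).const_mul (G q)).sub ((hW₁int.div_const B₁).const_mul (G q)))
  have hint_nonpos : (∫ p in (0:ℝ)..1, (G p - G q) * (W₂ p / B₂ - W₁ p / B₁)) ≤ 0 := by
    have hneg : 0 ≤ ∫ p in (0:ℝ)..1, -((G p - G q) * (W₂ p / B₂ - W₁ p / B₁)) := by
      apply intervalIntegral.integral_nonneg_of_ae_restrict (by norm_num : (0:ℝ) ≤ 1)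
      rw [Measure.restrict_congr_set Ioo_ae_eq_Icc.symm]
      filter_upwards [ae_restrict_mem measurableSet_Ioo] with p hp
      simpa using neg_nonneg.2 (hpt p hp)
    rw [intervalIntegral.integral_neg] at hneg
    linarith
  -- expand the integral
  have hexpand : (∫ p in (0:ℝ)..1, (G p - G q) * (W₂ p / B₂ - W₁ p / B₁))
      = (∫ p in (0:ℝ)..1, G p * W₂ p) / B₂ - (∫ p in (0:ℝ)..1, G p * W₁ p) / B₁ := by
    have heq : ∀ p : ℝ, (G p - G q) * (W₂ p / B₂ - W₁ p / B₁)
        = ((G p * W₂ p) / B₂ - (G p * W₁ p) / B₁)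
            - (G q * (W₂ p / B₂) - G q * (W₁ p / B₁)) := fun p => by ring
    rw [intervalIntegral.integral_congr (fun p _ => heq p)]
    rw [intervalIntegral.integral_sub ((hGW₂.div_const B₂).sub (hGW₁.div_const B₁))
      (((hW₂int.div_const B₂).const_mul (G q)).sub ((hW₁int.div_const B₁).const_mul (G q)))]
    rw [intervalIntegral.integral_sub (hGW₂.div_const B₂) (hGW₁.div_const B₁)]
    rw [intervalIntegral.integral_sub ((hW₂int.div_const B₂).const_mul (G q))
      ((hW₁int.div_const B₁).const_mul (G q))]
    rw [intervalIntegral.integral_div, intervalIntegral.integral_div,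
      intervalIntegral.integral_const_mul, intervalIntegral.integral_const_mul,
      intervalIntegral.integral_div, intervalIntegral.integral_div]
    rw [← hB₁def, ← hB₂def]
    rw [div_self hB₁.ne', div_self hB₂.ne']
    ring
  rw [hexpand] at hint_nonpos
  linarith

lemma BB.term_integrable (n s : ℕ) (c : ℝ) {a b : ℝ} (ha : 0 < a) (hb : 0 < b) :
    IntervalIntegrable (fun p : ℝ => c * p^s * (1-p)^(n-s) * (p ^ (a-1) * (1-p) ^ (b-1)))
      volume 0 1 :=
  (BB.intervalIntegrable_W ha hb).continuousOn_mul (by apply Continuous.continuousOn; fun_prop)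

lemma BB.term_integral (n s : ℕ) (hs : s + 1 ≤ n) (c : ℝ) {a b : ℝ} (ha : 0 < a) (hb : 0 < b) :
    ∫ p in (0:ℝ)..1, c * p^s * (1-p)^(n-s) * (p ^ (a-1) * (1-p) ^ (b-1))
      = c * (Gamma ((s:ℝ) + a) * Gamma ((n:ℝ) - s + b) / Gamma ((s:ℝ) + a + ((n:ℝ) - s + b))) := by
  have hsn : s ≤ n := by omega
  have hnb : 0 < (n:ℝ) - s + b := by
    have : (s:ℝ) + 1 ≤ (n:ℝ) := by exact_mod_cast hs
    linarith
  have hcongr : ∫ p in (0:ℝ)..1, c * p^s * (1-p)^(n-s) * (p ^ (a-1) * (1-p) ^ (b-1))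
      = ∫ p in (0:ℝ)..1, c * (p ^ (((s:ℝ) + a) - 1) * (1-p) ^ ((((n:ℝ) - s + b)) - 1)) := by
    apply intervalIntegral.integral_congr_ae
    refine Filter.Eventually.of_forall (fun x hx => ?_)
    rw [Set.uIoc_of_le (by norm_num : (0:ℝ) ≤ 1)] at hx
    obtain ⟨hx0, hx1⟩ := hx
    rcases eq_or_lt_of_le hx1 with h1 | h1
    · subst h1
      have hns : n - s ≠ 0 := by omega
      have hb1 : ((n:ℝ) - s + b) - 1 ≠ 0 := by
        have : (s:ℝ) + 1 ≤ (n:ℝ) := by exact_mod_cast hs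
        intro hcon; nlinarith
      have hb2 : b - 1 ≠ 0 ∨ True := Or.inr trivial
      by_cases hb' : b - 1 = 0
      · simp [sub_self, hns, Real.zero_rpow hb1, zero_pow hns]
      · simp [sub_self, hns, Real.zero_rpow hb1, Real.zero_rpow hb', zero_pow hns]
    · have h1x : 0 < 1 - x := by linarith
      rw [← Real.rpow_natCast x s, ← Real.rpow_natCast (1-x) (n-s)]
      rw [show c * x^((s:ℕ):ℝ) * (1-x)^(((n-s:ℕ)):ℝ) * (x^(a-1)*(1-x)^(b-1))
          = c * ((x^((s:ℕ):ℝ) * x^(a-1)) * ((1-x)^(((n-s:ℕ)):ℝ) * (1-x)^(b-1))) from by ring]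
      rw [← Real.rpow_add hx0, ← Real.rpow_add h1x]
      rw [show (s:ℝ) + (a-1) = ((s:ℝ) + a) - 1 from by ring]
      rw [show ((n-s:ℕ):ℝ) + (b-1) = ((n:ℝ) - s + b) - 1 from by
        rw [Nat.cast_sub hsn]; ring]
  rw [hcongr, intervalIntegral.integral_const_mul,
    BB.integral_W (by positivity) hnb]

lemma BB.E_eq (n k : ℕ) (hk : k + 1 ≤ n) {τ a b : ℝ} (ha : 0 < a) (hb : 0 < b)
    (hab : a + b = τ) :
    ∑ s ∈ Finset.range (k+1), (n.choose s : ℝ) * Real.Gamma ((s:ℝ) + a) *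
        Real.Gamma ((n:ℝ) - s + b) * Real.Gamma τ /
        (Real.Gamma ((n:ℝ) + τ) * Real.Gamma a * Real.Gamma b)
      = (∫ p in (0:ℝ)..1, (∑ s ∈ Finset.range (k+1), (n.choose s : ℝ) * p^s * (1-p)^(n-s)) *
          (p ^ (a-1) * (1-p) ^ (b-1)))
        / ∫ p in (0:ℝ)..1, p ^ (a-1) * (1-p) ^ (b-1) := by
  have hnum : (∫ p in (0:ℝ)..1, (∑ s ∈ Finset.range (k+1), (n.choose s : ℝ) * p^s * (1-p)^(n-s)) *
          (p ^ (a-1) * (1-p) ^ (b-1)))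
      = ∑ s ∈ Finset.range (k+1), (n.choose s : ℝ) *
          (Gamma ((s:ℝ) + a) * Gamma ((n:ℝ) - s + b) / Gamma ((s:ℝ) + a + ((n:ℝ) - s + b))) := by
    have : (fun p : ℝ => (∑ s ∈ Finset.range (k+1), (n.choose s : ℝ) * p^s * (1-p)^(n-s)) *
          (p ^ (a-1) * (1-p) ^ (b-1)))
        = fun p : ℝ => ∑ s ∈ Finset.range (k+1),
            (n.choose s : ℝ) * p^s * (1-p)^(n-s) * (p ^ (a-1) * (1-p) ^ (b-1)) := by
      funext p; rw [Finset.sum_mul]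
    rw [this, intervalIntegral.integral_finset_sum]
    · exact Finset.sum_congr rfl fun s hs =>
        BB.term_integral n s (by have := Finset.mem_range.1 hs; omega) _ ha hb
    · intro s _
      exact BB.term_integrable n s _ ha hb
  rw [hnum, BB.integral_W ha hb, hab]
  rw [Finset.sum_div]
  refine Finset.sum_congr rfl fun s hs => ?_
  have hs' : s + 1 ≤ n := by have := Finset.mem_range.1 hs; omega
  have hnb : 0 < (n:ℝ) - s + b := by
    have : (s:ℝ) + 1 ≤ (n:ℝ) := by exact_mod_cast hs'
    linarith
  have hΓτ : 0 < Gamma τ := Real.Gamma_pos_of_pos (by linarith)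
  have hΓa : 0 < Gamma a := Real.Gamma_pos_of_pos ha
  have hΓb : 0 < Gamma b := Real.Gamma_pos_of_pos hb
  have hΓn : 0 < Gamma ((n:ℝ) + τ) := Real.Gamma_pos_of_pos (by
    have : (0:ℝ) ≤ n := Nat.cast_nonneg n
    linarith)
  rw [show (s:ℝ) + a + ((n:ℝ) - s + b) = (n:ℝ) + τ from by rw [← hab]; ring]
  field_simp

/-- Lemma B.6 of the paper: the beta-binomial survival function `t ↦ B̄_{n,t,ρ}(k)` (the
survival function of the `Beta-Binomial(n, tτ, (1−t)τ)` distribution at `k`, with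
`τ = (n−ρ)/(ρ−1)`, degenerate at `0` for `t = 0` and at `n` for `t = 1`) is nondecreasing
on `[0,1]`. -/
theorem betaBinomial_survival_mono (n k : ℕ) (hn : 1 ≤ n) (hk : k ≤ n - 1)
    (ρ : ℝ) (hρ : ρ ∈ Set.Ioo (1 : ℝ) n) (τ : ℝ) (hτ : τ = ((n : ℝ) - ρ) / (ρ - 1))
    (f : ℝ → ℝ) (hf0 : f 0 = 0) (hf1 : f 1 = 1)
    (hf : ∀ t ∈ Set.Ioo (0 : ℝ) 1,
      f t = 1 - ∑ s ∈ Finset.range (k + 1),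
        (n.choose s : ℝ) * Real.Gamma ((s : ℝ) + t * τ) * Real.Gamma ((n : ℝ) - s + (1 - t) * τ) *
          Real.Gamma τ /
        (Real.Gamma ((n : ℝ) + τ) * Real.Gamma (t * τ) * Real.Gamma ((1 - t) * τ))) :
    ∀ t₁ t₂ : ℝ, 0 ≤ t₁ → t₁ ≤ t₂ → t₂ ≤ 1 → f t₁ ≤ f t₂ := by
  intro t₁ t₂ h0 h12 h21
  obtain ⟨m, rfl⟩ : ∃ m, n = m + 1 := ⟨n - 1, by omega⟩
  obtain ⟨hρ1, hρn⟩ := hρ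
  have hτpos : 0 < τ := by
    rw [hτ]; apply div_pos <;> linarith
  have hk' : k ≤ m := by omega
  -- expression of f on the interior via integrals
  have hfE : ∀ t ∈ Set.Ioo (0:ℝ) 1, f t
      = 1 - (∫ p in (0:ℝ)..1,
            (∑ s ∈ Finset.range (k+1), ((m+1).choose s : ℝ) * p^s * (1-p)^(m+1-s)) *
              (p ^ (t*τ-1) * (1-p) ^ ((1-t)*τ-1)))
          / ∫ p in (0:ℝ)..1, p ^ (t*τ-1) * (1-p) ^ ((1-t)*τ-1) := by
    intro t ht
    rw [hf t ht, BB.E_eq (m+1) k (by omega) (mul_pos ht.1 hτpos)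
      (mul_pos (by linarith [ht.2]) hτpos) (by ring)]
  -- bounds for the normalized integral on the interior
  have hbounds : ∀ t ∈ Set.Ioo (0:ℝ) 1,
      (0:ℝ) ≤ (∫ p in (0:ℝ)..1,
            (∑ s ∈ Finset.range (k+1), ((m+1).choose s : ℝ) * p^s * (1-p)^(m+1-s)) *
              (p ^ (t*τ-1) * (1-p) ^ ((1-t)*τ-1)))
          / (∫ p in (0:ℝ)..1, p ^ (t*τ-1) * (1-p) ^ ((1-t)*τ-1)) ∧
      (∫ p in (0:ℝ)..1,
            (∑ s ∈ Finset.range (k+1), ((m+1).choose s : ℝ) * p^s * (1-p)^(m+1-s)) *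
              (p ^ (t*τ-1) * (1-p) ^ ((1-t)*τ-1)))
          / (∫ p in (0:ℝ)..1, p ^ (t*τ-1) * (1-p) ^ ((1-t)*τ-1)) ≤ 1 := by
    intro t ht
    have ha : 0 < t*τ := mul_pos ht.1 hτpos
    have hb : 0 < (1-t)*τ := mul_pos (by linarith [ht.2]) hτpos
    have hden := BB.integral_W_pos ha hb
    have hWint := BB.intervalIntegrable_W ha hb
    have hGWint : IntervalIntegrable (fun p : ℝ =>
        (∑ s ∈ Finset.range (k+1), ((m+1).choose s : ℝ) * p^s * (1-p)^(m+1-s)) *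
          (p ^ (t*τ-1) * (1-p) ^ ((1-t)*τ-1))) volume 0 1 :=
      hWint.continuousOn_mul (by apply Continuous.continuousOn; fun_prop)
    have hWnn : ∀ x ∈ Set.Icc (0:ℝ) 1, 0 ≤ x ^ (t*τ-1) * (1-x) ^ ((1-t)*τ-1) := by
      intro x hx
      exact mul_nonneg (Real.rpow_nonneg hx.1 _) (Real.rpow_nonneg (by linarith [hx.2]) _)
    constructor
    · apply div_nonneg _ hden.le
      apply intervalIntegral.integral_nonneg (by norm_num : (0:ℝ) ≤ 1)
      intro x hx
      exact mul_nonneg (BB.G_nonneg m k hx.1 hx.2) (hWnn x hx)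
    · rw [div_le_one hden]
      apply intervalIntegral.integral_mono_on (by norm_num : (0:ℝ) ≤ 1) hGWint hWint
      intro x hx
      exact mul_le_of_le_one_left (hWnn x hx) (BB.G_le_one m k hk' hx.1 hx.2)
  rcases eq_or_lt_of_le h12 with rfl | hlt
  · exact le_refl _
  by_cases ht1 : t₁ = 0
  · subst ht1
    rw [hf0]
    by_cases ht2 : t₂ = 1
    · subst ht2; rw [hf1]; norm_num
    · have ht2' : t₂ ∈ Set.Ioo (0:ℝ) 1 := ⟨hlt, lt_of_le_of_ne h21 ht2⟩
      rw [hfE t₂ ht2']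
      linarith [(hbounds t₂ ht2').2]
  · have ht1' : t₁ ∈ Set.Ioo (0:ℝ) 1 :=
      ⟨lt_of_le_of_ne h0 (Ne.symm ht1), lt_of_lt_of_le hlt h21⟩
    by_cases ht2 : t₂ = 1
    · subst ht2
      rw [hf1, hfE t₁ ht1']
      linarith [(hbounds t₁ ht1').1]
    · have ht2' : t₂ ∈ Set.Ioo (0:ℝ) 1 := ⟨lt_of_le_of_lt h0 hlt, lt_of_le_of_ne h21 ht2⟩
      rw [hfE t₁ ht1', hfE t₂ ht2']
      have hkey := BB.key
        (fun q : ℝ => ∑ s ∈ Finset.range (k+1), ((m+1).choose s : ℝ) * q^s * (1-q)^(m+1-s))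
        (BB.G_antitoneOn m k hk') (BB.G_continuousOn m k)
        (mul_pos ht1'.1 hτpos) (mul_pos (by linarith [ht1'.2] : (0:ℝ) < 1 - t₁) hτpos)
        (mul_pos ht2'.1 hτpos) (mul_pos (by linarith [ht2'.2] : (0:ℝ) < 1 - t₂) hτpos)
        (by ring) (mul_le_mul_of_nonneg_right h12 hτpos.le)
      linarith [hkey]
end
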